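/- arXiv:1907.02654 — 2 statements merged into one kernel-verified Lean document; each statement's English description precedes it below -/
import Mathlib

section
/- Let ℓ : [0,T] × ℝᵈ × ℝᵏ → ℝ be continuous and satisfy c₀|u|² − c₁ ≤ ℓ(t,x,u) ≤ c₁ + (1/c₀)|u|² and |ℓ(t,x,u) − ℓ(t,y,u)| ≤ c₂(1+|u|)|x−y| for all t, x, y, u (c₀ > 0, c₁, c₂ ≥ 0), and let g : ℝᵈ → ℝ be bounded and Lipschitz. Define the value function V(t,x) = inf_{u ∈ L²(t,T;ℝᵏ)} { ∫ₜᵀ ℓ(s, γ(s), u(s)) ds + g(γ(T)) }, where γ(s) = e^{(s−t)A}x + ∫ₜˢ e^{(s−τ)A}B u(τ) dτ. Assume moreover that for every R > 0 there is κ_R ≥ 0 such that for every (t,x) ∈ [0,T] × B̄_R the infimum is attained by some control u* with ‖u*‖_{L^∞(t,T)} ≤ κ_R. Then V is locally Lipschitz continuous on [0,T] × ℝᵈ: for every R > 0 there exists C_R ≥ 0 such that |V(t,x) − V(s,y)| ≤ C_R(|x−y| + |t−s|) for all t, s ∈ [0,T] and x, y ∈ B̄_R. -/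
/-!
A bounded optimal control for one initial datum is an admissible competitor for a nearby one.
Moving the initial state from `y` to `x` moves the trajectory by `e^{(s-t)A}(x - y)`, so by the
Lipschitz bounds on `ℓ` and `g` the cost changes by `O(‖x - y‖)`. Moving the initial time from
`t` to `s > t`, compare the optimal control from `s` with its extension by `0` on `(t, s]`, and the
optimal control from `t` with its restriction to `(s, T]`: the trajectories on `[s, T]` differ by
`O(s - t)`, because `r ↦ e^{rA}` is Lipschitz on `[-T, T]` and the control contributes at most
`‖B‖ κ (s - t)`, while the growth bounds give `|∫ₜˢ ℓ| ≤ c₁ (s - t)` in the direction needed.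
-/

open MeasureTheory Set

/-- The trajectory started from `x` at time `t`: `γ(s) = e^{(s-t)A}x + ∫ₜˢ e^{(s-τ)A}Bu(τ)dτ`. -/
noncomputable def trajFrom {d k : ℕ}
    (A : EuclideanSpace ℝ (Fin d) →L[ℝ] EuclideanSpace ℝ (Fin d))
    (B : EuclideanSpace ℝ (Fin k) →L[ℝ] EuclideanSpace ℝ (Fin d))
    (t : ℝ) (x : EuclideanSpace ℝ (Fin d)) (u : ℝ → EuclideanSpace ℝ (Fin k)) (s : ℝ) :
    EuclideanSpace ℝ (Fin d) :=
  NormedSpace.exp ((s - t) • A) x +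
    ∫ τ in Set.Ioc t s, NormedSpace.exp ((s - τ) • A) (B (u τ))

/-- The cost of the control `u` starting from `x` at time `t`. -/
noncomputable def costFrom {d k : ℕ} (T : ℝ)
    (A : EuclideanSpace ℝ (Fin d) →L[ℝ] EuclideanSpace ℝ (Fin d))
    (B : EuclideanSpace ℝ (Fin k) →L[ℝ] EuclideanSpace ℝ (Fin d))
    (ℓ : ℝ → EuclideanSpace ℝ (Fin d) → EuclideanSpace ℝ (Fin k) → ℝ)
    (g : EuclideanSpace ℝ (Fin d) → ℝ)
    (t : ℝ) (x : EuclideanSpace ℝ (Fin d)) (u : ℝ → EuclideanSpace ℝ (Fin k)) : ℝ :=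
  (∫ s in Set.Ioc t T, ℓ s (trajFrom A B t x u s) (u s)) + g (trajFrom A B t x u T)

/-- The value function `V(t,x) = inf_{u ∈ L²(t,T;ℝᵏ)} costFrom t x u`. -/
noncomputable def valueFun {d k : ℕ} (T : ℝ)
    (A : EuclideanSpace ℝ (Fin d) →L[ℝ] EuclideanSpace ℝ (Fin d))
    (B : EuclideanSpace ℝ (Fin k) →L[ℝ] EuclideanSpace ℝ (Fin d))
    (ℓ : ℝ → EuclideanSpace ℝ (Fin d) → EuclideanSpace ℝ (Fin k) → ℝ)
    (g : EuclideanSpace ℝ (Fin d) → ℝ)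
    (t : ℝ) (x : EuclideanSpace ℝ (Fin d)) : ℝ :=
  sInf ((fun u => costFrom T A B ℓ g t x u) ''
    {u : ℝ → EuclideanSpace ℝ (Fin k) | MemLp u 2 (volume.restrict (Set.Ioc t T))})

open NormedSpace

section Semigroup

variable {X : Type*} [NormedAddCommGroup X] [NormedSpace ℝ X] [CompleteSpace X]

theorem norm_exp_le_exp_norm (A : X →L[ℝ] X) : ‖exp A‖ ≤ Real.exp ‖A‖ := by
  rw [← (exp_series_hasSum_exp' (𝕂 := ℝ) A).tsum_eq]
  refine tsum_of_norm_bounded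
    (by rw [Real.exp_eq_exp_ℝ]; exact exp_series_hasSum_exp' (𝕂 := ℝ) ‖A‖) fun n => ?_
  rw [norm_smul, Real.norm_of_nonneg (by positivity), smul_eq_mul]
  gcongr
  rcases n with _ | n
  · simpa [ContinuousLinearMap.one_def] using ContinuousLinearMap.norm_id_le
  · exact norm_pow_le' A n.succ_pos

theorem norm_exp_smul_le (A : X →L[ℝ] X) {r T : ℝ} (hr : |r| ≤ T) :
    ‖exp (r • A)‖ ≤ Real.exp (T * ‖A‖) := by
  refine (norm_exp_le_exp_norm _).trans (Real.exp_le_exp.2 ?_)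
  rw [norm_smul, Real.norm_eq_abs]
  gcongr

theorem exp_add_smul (A : X →L[ℝ] X) (a b : ℝ) :
    exp ((a + b) • A) = exp (a • A) * exp (b • A) := by
  let _ : NormedAlgebra ℚ (X →L[ℝ] X) := NormedAlgebra.restrictScalars ℚ ℝ _
  rw [add_smul]
  exact exp_add_of_commute (((Commute.refl A).smul_left a).smul_right b)

theorem continuous_exp_smul (A : X →L[ℝ] X) : Continuous fun r : ℝ => exp (r • A) :=
  (differentiable_exp_smul_const ℝ A).continuous

theorem norm_exp_smul_sub_exp_smul_le (A : X →L[ℝ] X) {r r' T : ℝ} (hr : |r| ≤ T)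
    (hr' : |r'| ≤ T) :
    ‖exp (r • A) - exp (r' • A)‖ ≤ ‖A‖ * Real.exp (T * ‖A‖) * |r - r'| := by
  have hderiv (ρ : ℝ) (hρ : ρ ∈ Icc (-T) T) : ‖exp (ρ • A) * A‖ ≤ ‖A‖ * Real.exp (T * ‖A‖) :=
    (norm_mul_le _ _).trans <| by
      rw [mul_comm]; gcongr; exact norm_exp_smul_le A (abs_le.2 hρ)
  simpa using (convex_Icc (-T) T).norm_image_sub_le_of_norm_hasDerivWithin_le
    (fun ρ _ => (hasDerivAt_exp_smul_const A ρ).hasDerivWithinAt) hderiv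
    (abs_le.1 hr') (abs_le.1 hr)

end Semigroup

theorem integrableOn_Icc_clm_apply {X Z : Type*} [NormedAddCommGroup X] [NormedSpace ℝ X]
    [NormedAddCommGroup Z] [NormedSpace ℝ Z] {G : ℝ → X →L[ℝ] Z} (hG : Continuous G)
    {v : ℝ → X} (hv : StronglyMeasurable v) {C : ℝ} (hvC : ∀ τ, ‖v τ‖ ≤ C) (a b : ℝ) :
    IntegrableOn (fun τ => G τ (v τ)) (Icc a b) := by
  refine Integrable.mono'
    ((hG.norm.mul continuous_const : Continuous fun τ => ‖G τ‖ * C).integrableOn_Icc)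
    (isBoundedBilinearMap_apply.continuous.comp_stronglyMeasurable
      (hG.stronglyMeasurable.prodMk hv)).aestronglyMeasurable
    (ae_of_all _ fun τ => (G τ).le_opNorm_of_le (hvC τ))

noncomputable def costAlong {X Y : Type*} (T : ℝ) (ℓ : ℝ → X → Y → ℝ) (g : X → ℝ) (s : ℝ)
    (γ : ℝ → X) (u : ℝ → Y) : ℝ :=
  (∫ σ in Ioc s T, ℓ σ (γ σ) (u σ)) + g (γ T)

theorem costAlong_eq_integral_add {X Y : Type*} {T : ℝ} {ℓ : ℝ → X → Y → ℝ} {g : X → ℝ}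
    {t s : ℝ} {γ : ℝ → X} {u : ℝ → Y} (hts : t ≤ s) (hsT : s ≤ T)
    (hint : IntegrableOn (fun σ => ℓ σ (γ σ) (u σ)) (Ioc t T)) :
    costAlong T ℓ g t γ u = (∫ σ in Ioc t s, ℓ σ (γ σ) (u σ)) + costAlong T ℓ g s γ u := by
  rw [costAlong, costAlong, ← Ioc_union_Ioc_eq_Ioc hts hsT,
    setIntegral_union (Ioc_disjoint_Ioc_of_le le_rfl) measurableSet_Ioc
      (hint.mono_set (Ioc_subset_Ioc_right hsT)) (hint.mono_set (Ioc_subset_Ioc_left hts)),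
    add_assoc]

section Lagrangian

variable {X Y : Type*} [NormedAddCommGroup X] [NormedAddCommGroup Y]

/-- Assumptions (L1)–(L4) of the paper on `ℓ(t, x, u) = L(x, u, m_t)`. -/
structure LagrangianBounds (c₀ c₁ c₂ : ℝ) (ℓ : ℝ → X → Y → ℝ) : Prop where
  continuous_uncurry : Continuous fun p : ℝ × X × Y => ℓ p.1 p.2.1 p.2.2
  c₀_pos : 0 < c₀
  c₂_nonneg : 0 ≤ c₂
  growth : ∀ t x u, c₀ * ‖u‖ ^ 2 - c₁ ≤ ℓ t x u ∧ ℓ t x u ≤ c₁ + (1 / c₀) * ‖u‖ ^ 2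
  lipschitz : ∀ t x y u, |ℓ t x u - ℓ t y u| ≤ c₂ * (1 + ‖u‖) * ‖x - y‖

namespace LagrangianBounds

variable {c₀ c₁ c₂ : ℝ} {ℓ : ℝ → X → Y → ℝ}

theorem neg_le (h : LagrangianBounds c₀ c₁ c₂ ℓ) (t : ℝ) (x : X) (u : Y) : -c₁ ≤ ℓ t x u := by
  nlinarith [(h.growth t x u).1, h.c₀_pos, sq_nonneg ‖u‖]

theorem abs_le_of_norm_le (h : LagrangianBounds c₀ c₁ c₂ ℓ) (t : ℝ) (x : X) {u : Y} {κ : ℝ}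
    (hu : ‖u‖ ≤ κ) : |ℓ t x u| ≤ c₁ + 1 / c₀ * κ ^ 2 := by
  have hsq : ‖u‖ ^ 2 ≤ κ ^ 2 := pow_le_pow_left₀ (norm_nonneg u) hu 2
  have hinv : 0 ≤ 1 / c₀ := one_div_nonneg.2 h.c₀_pos.le
  refine _root_.abs_le.2 ⟨?_, ?_⟩
  · nlinarith [h.neg_le t x u]
  · nlinarith [(h.growth t x u).2]

theorem abs_apply_zero_le (h : LagrangianBounds c₀ c₁ c₂ ℓ) (t : ℝ) (x : X) : |ℓ t x 0| ≤ c₁ := by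
  simpa using h.abs_le_of_norm_le t x (norm_zero (E := Y)).le

theorem integrableOn (h : LagrangianBounds c₀ c₁ c₂ ℓ) {γ : ℝ → X} {u : ℝ → Y} {a b κ : ℝ}
    (hγ : ContinuousOn γ (Icc a b)) (hu : StronglyMeasurable u) (huκ : ∀ τ, ‖u τ‖ ≤ κ) :
    IntegrableOn (fun σ => ℓ σ (γ σ) (u σ)) (Ioc a b) := by
  have hγm : AEStronglyMeasurable γ (volume.restrict (Ioc a b)) :=
    (hγ.mono Ioc_subset_Icc_self).aestronglyMeasurable measurableSet_Ioc
  refine Integrable.mono' (integrableOn_const (C := c₁ + 1 / c₀ * κ ^ 2) measure_Ioc_lt_top.ne)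
    (h.continuous_uncurry.comp_aestronglyMeasurable
      (aestronglyMeasurable_id.prodMk (hγm.prodMk hu.aestronglyMeasurable)))
    (ae_of_all _ fun σ => h.abs_le_of_norm_le σ (γ σ) (huκ σ))

theorem abs_costAlong_sub_costAlong_le (h : LagrangianBounds c₀ c₁ c₂ ℓ) {T : ℝ} {g : X → ℝ}
    {Kg : NNReal} (hg : LipschitzWith Kg g) {s κ δ : ℝ} (hsT : s ≤ T) {γ₁ γ₂ : ℝ → X}
    {u v : ℝ → Y} (huκ : ∀ τ, ‖u τ‖ ≤ κ) (hvu : EqOn v u (Ioc s T))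
    (hγ : ∀ σ ∈ Icc s T, ‖γ₁ σ - γ₂ σ‖ ≤ δ)
    (hint₁ : IntegrableOn (fun σ => ℓ σ (γ₁ σ) (v σ)) (Ioc s T))
    (hint₂ : IntegrableOn (fun σ => ℓ σ (γ₂ σ) (u σ)) (Ioc s T)) :
    |costAlong T ℓ g s γ₁ v - costAlong T ℓ g s γ₂ u| ≤ (c₂ * (1 + κ) * (T - s) + Kg) * δ := by
  have hrun : |(∫ σ in Ioc s T, ℓ σ (γ₁ σ) (v σ)) - ∫ σ in Ioc s T, ℓ σ (γ₂ σ) (u σ)|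
      ≤ c₂ * (1 + κ) * δ * (T - s) := by
    rw [← integral_sub hint₁ hint₂, ← Real.norm_eq_abs, ← Real.volume_real_Ioc_of_le hsT]
    refine norm_setIntegral_le_of_norm_le_const measure_Ioc_lt_top fun σ hσ => ?_
    rw [Real.norm_eq_abs, hvu hσ]
    have hκ : 0 ≤ 1 + κ := by linarith [norm_nonneg (u σ), huκ σ]
    refine (h.lipschitz σ _ _ _).trans (mul_le_mul ?_ (hγ σ (Ioc_subset_Icc_self hσ))
      (norm_nonneg _) (mul_nonneg h.c₂_nonneg hκ))
    exact mul_le_mul_of_nonneg_left (by linarith [huκ σ]) h.c₂_nonneg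
  have hfinal : |g (γ₁ T) - g (γ₂ T)| ≤ Kg * δ := by
    rw [← Real.dist_eq]
    exact (hg.dist_le_mul _ _).trans (by rw [dist_eq_norm]; gcongr; exact hγ T ⟨hsT, le_rfl⟩)
  calc |costAlong T ℓ g s γ₁ v - costAlong T ℓ g s γ₂ u|
      ≤ |(∫ σ in Ioc s T, ℓ σ (γ₁ σ) (v σ)) - ∫ σ in Ioc s T, ℓ σ (γ₂ σ) (u σ)|
        + |g (γ₁ T) - g (γ₂ T)| := by
        rw [costAlong, costAlong, add_sub_add_comm]; exact abs_add_le _ _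
    _ ≤ (c₂ * (1 + κ) * (T - s) + Kg) * δ := by linarith

end LagrangianBounds

end Lagrangian

theorem exists_stronglyMeasurable_norm_le_ae_eq {α E : Type*} [MeasurableSpace α]
    {μ : Measure α} [NormedAddCommGroup E] {u : α → E} (hu : AEStronglyMeasurable u μ) {κ : ℝ}
    (hκ : 0 ≤ κ) (hbound : ∀ᵐ a ∂μ, ‖u a‖ ≤ κ) :
    ∃ u' : α → E, StronglyMeasurable u' ∧ (∀ a, ‖u' a‖ ≤ κ) ∧ u' =ᵐ[μ] u := by
  set S := {a | ‖hu.mk u a‖ ≤ κ}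
  refine ⟨S.indicator (hu.mk u), hu.stronglyMeasurable_mk.indicator
    (measurableSet_le hu.stronglyMeasurable_mk.norm.measurable measurable_const), fun a => ?_, ?_⟩
  · by_cases ha : a ∈ S
    · rwa [indicator_of_mem ha]
    · rwa [indicator_of_notMem ha, norm_zero]
  · filter_upwards [hu.ae_eq_mk, hbound] with a hmk ha
    rw [indicator_of_mem (s := S) (show ‖hu.mk u a‖ ≤ κ by rwa [← hmk]), hmk]

section Trajectory

variable {d k : ℕ} {A : EuclideanSpace ℝ (Fin d) →L[ℝ] EuclideanSpace ℝ (Fin d)}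
  {B : EuclideanSpace ℝ (Fin k) →L[ℝ] EuclideanSpace ℝ (Fin d)}
  {u v : ℝ → EuclideanSpace ℝ (Fin k)} {κ : ℝ}

theorem trajFrom_sub_trajFrom (t : ℝ) (x y : EuclideanSpace ℝ (Fin d)) (σ : ℝ) :
    trajFrom A B t x u σ - trajFrom A B t y u σ = exp ((σ - t) • A) (x - y) := by
  rw [trajFrom, trajFrom, add_sub_add_right_eq_sub, map_sub]

theorem integrableOn_Icc_exp_smul_apply (hu : StronglyMeasurable u) (huκ : ∀ τ, ‖u τ‖ ≤ κ)
    (c a b : ℝ) : IntegrableOn (fun τ => exp ((c - τ) • A) (B (u τ))) (Icc a b) :=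
  integrableOn_Icc_clm_apply ((continuous_exp_smul A).comp (continuous_const.sub continuous_id))
    (B.continuous.comp_stronglyMeasurable hu) (fun τ => B.le_opNorm_of_le (huκ τ)) a b

theorem trajFrom_eq_exp_smul_apply (hu : StronglyMeasurable u) (huκ : ∀ τ, ‖u τ‖ ≤ κ) (t : ℝ)
    (x : EuclideanSpace ℝ (Fin d)) (σ : ℝ) :
    trajFrom A B t x u σ =
      exp ((σ - t) • A) (x + ∫ τ in Ioc t σ, exp ((t - τ) • A) (B (u τ))) := by
  rw [trajFrom, map_add, ← ContinuousLinearMap.integral_comp_comm _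
    ((integrableOn_Icc_exp_smul_apply hu huκ t t σ).mono_set Ioc_subset_Icc_self)]
  congr 1
  refine setIntegral_congr_fun measurableSet_Ioc fun τ _ => ?_
  rw [← mul_apply_eq_comp, ← exp_add_smul, sub_add_sub_cancel]

theorem continuousOn_trajFrom (hu : StronglyMeasurable u) (huκ : ∀ τ, ‖u τ‖ ≤ κ) (t : ℝ)
    (x : EuclideanSpace ℝ (Fin d)) (T : ℝ) : ContinuousOn (trajFrom A B t x u) (Icc t T) :=
  (((continuous_exp_smul A).comp (continuous_id.sub continuous_const)).continuousOn.clm_apply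
    (continuousOn_const.add (intervalIntegral.continuousOn_primitive
      (integrableOn_Icc_exp_smul_apply hu huκ t t T)))).congr
    fun σ _ => trajFrom_eq_exp_smul_apply hu huκ t x σ

theorem trajFrom_sub_trajFrom_of_eqOn {t s σ : ℝ} (hts : t ≤ s) (hsσ : s ≤ σ)
    (hv : StronglyMeasurable v) (hvκ : ∀ τ, ‖v τ‖ ≤ κ) (hvu : EqOn v u (Ioc s σ))
    (y : EuclideanSpace ℝ (Fin d)) :
    trajFrom A B t y v σ - trajFrom A B s y u σ =
      (exp ((σ - t) • A) - exp ((σ - s) • A)) y + ∫ τ in Ioc t s, exp ((σ - τ) • A) (B (v τ)) := by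
  have hint := integrableOn_Icc_exp_smul_apply (A := A) (B := B) hv hvκ σ
  rw [trajFrom, trajFrom, ← Ioc_union_Ioc_eq_Ioc hts hsσ,
    setIntegral_union (Ioc_disjoint_Ioc_of_le le_rfl) measurableSet_Ioc
      ((hint t s).mono_set Ioc_subset_Icc_self) ((hint s σ).mono_set Ioc_subset_Icc_self),
    setIntegral_congr_fun (s := Ioc s σ) measurableSet_Ioc fun τ hτ => by rw [hvu hτ],
    sub_apply]
  abel

theorem norm_trajFrom_sub_trajFrom_le {t s σ T R : ℝ} (ht : 0 ≤ t) (hts : t ≤ s)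
    (hσ : σ ∈ Icc s T) (hv : StronglyMeasurable v) (hvκ : ∀ τ, ‖v τ‖ ≤ κ)
    (hvu : EqOn v u (Ioc s σ)) {y : EuclideanSpace ℝ (Fin d)} (hy : ‖y‖ ≤ R) :
    ‖trajFrom A B t y v σ - trajFrom A B s y u σ‖ ≤
      (‖A‖ * R + ‖B‖ * κ) * Real.exp (T * ‖A‖) * (s - t) := by
  have hsemigroup : ‖(exp ((σ - t) • A) - exp ((σ - s) • A)) y‖ ≤
      ‖A‖ * Real.exp (T * ‖A‖) * (s - t) * R := by
    refine ContinuousLinearMap.le_of_opNorm_le_of_le _ ?_ hy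
    convert norm_exp_smul_sub_exp_smul_le A (T := T) ?_ ?_ using 2
    · rw [sub_sub_sub_cancel_left, abs_of_nonneg (sub_nonneg.2 hts)]
    all_goals rw [abs_le]; constructor <;> linarith [hσ.1, hσ.2]
  have hcontrol : ‖∫ τ in Ioc t s, exp ((σ - τ) • A) (B (v τ))‖ ≤
      Real.exp (T * ‖A‖) * (‖B‖ * κ) * (s - t) := by
    rw [← Real.volume_real_Ioc_of_le hts]
    refine norm_setIntegral_le_of_norm_le_const measure_Ioc_lt_top fun τ hτ => ?_
    refine ContinuousLinearMap.le_of_opNorm_le_of_le _ (norm_exp_smul_le A ?_)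
      (B.le_opNorm_of_le (hvκ τ))
    rw [abs_le]; constructor <;> linarith [hτ.1, hτ.2, hσ.1, hσ.2]
  rw [trajFrom_sub_trajFrom_of_eqOn hts hσ.1 hv hvκ hvu]
  refine (norm_add_le _ _).trans ?_
  linarith

end Trajectory

section ControlProblem

variable {d k : ℕ} {T : ℝ} {A : EuclideanSpace ℝ (Fin d) →L[ℝ] EuclideanSpace ℝ (Fin d)}
  {B : EuclideanSpace ℝ (Fin k) →L[ℝ] EuclideanSpace ℝ (Fin d)}
  {ℓ : ℝ → EuclideanSpace ℝ (Fin d) → EuclideanSpace ℝ (Fin k) → ℝ}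
  {g : EuclideanSpace ℝ (Fin d) → ℝ} {c₀ c₁ c₂ κ Mg R : ℝ} {Kg : NNReal}
  {u v : ℝ → EuclideanSpace ℝ (Fin k)}

theorem costFrom_eq_costAlong (t : ℝ) (x : EuclideanSpace ℝ (Fin d)) :
    costFrom T A B ℓ g t x u = costAlong T ℓ g t (trajFrom A B t x u) u :=
  rfl

theorem costFrom_congr_ae {t : ℝ} (x : EuclideanSpace ℝ (Fin d))
    (huv : u =ᵐ[volume.restrict (Ioc t T)] v) :
    costFrom T A B ℓ g t x u = costFrom T A B ℓ g t x v := by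
  have htraj (σ : ℝ) (hσ : σ ≤ T) : trajFrom A B t x u σ = trajFrom A B t x v σ := by
    rw [trajFrom, trajFrom]
    congr 1
    refine integral_congr_ae ?_
    filter_upwards [ae_restrict_of_ae_restrict_of_subset (Ioc_subset_Ioc_right hσ) huv]
      with τ hτ
    rw [hτ]
  rw [costFrom, costFrom, htraj T le_rfl]
  congr 1
  refine integral_congr_ae ?_
  filter_upwards [huv, ae_restrict_mem measurableSet_Ioc] with σ hσ hσT
  rw [hσ, htraj σ hσT.2]

theorem abs_costFrom_sub_costFrom_le (h : LagrangianBounds c₀ c₁ c₂ ℓ) (hg : LipschitzWith Kg g)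
    (hu : StronglyMeasurable u) (huκ : ∀ τ, ‖u τ‖ ≤ κ) {t : ℝ} (ht : t ∈ Icc 0 T)
    (x y : EuclideanSpace ℝ (Fin d)) :
    |costFrom T A B ℓ g t x u - costFrom T A B ℓ g t y u| ≤
      (c₂ * (1 + κ) * T + Kg) * (Real.exp (T * ‖A‖) * ‖x - y‖) := by
  have hδ (σ : ℝ) (hσ : σ ∈ Icc t T) :
      ‖trajFrom A B t x u σ - trajFrom A B t y u σ‖ ≤ Real.exp (T * ‖A‖) * ‖x - y‖ := by
    rw [trajFrom_sub_trajFrom]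
    refine ContinuousLinearMap.le_of_opNorm_le_of_le _ (norm_exp_smul_le A ?_) le_rfl
    rw [abs_le]; constructor <;> linarith [hσ.1, hσ.2, ht.1]
  have hκ : 0 ≤ κ := (norm_nonneg _).trans (huκ 0)
  have hc₂ := h.c₂_nonneg
  refine (h.abs_costAlong_sub_costAlong_le hg ht.2 huκ (eqOn_refl _ _) hδ
    (h.integrableOn (continuousOn_trajFrom hu huκ t x T) hu huκ)
    (h.integrableOn (continuousOn_trajFrom hu huκ t y T) hu huκ)).trans ?_
  gcongr
  linarith [ht.1]

theorem abs_costAlong_trajFrom_sub_le (h : LagrangianBounds c₀ c₁ c₂ ℓ)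
    (hg : LipschitzWith Kg g) (hu : StronglyMeasurable u) (huκ : ∀ τ, ‖u τ‖ ≤ κ)
    (hv : StronglyMeasurable v) (hvκ : ∀ τ, ‖v τ‖ ≤ κ) {t s : ℝ} (hvu : EqOn v u (Ioc s T))
    (ht : 0 ≤ t) (hts : t ≤ s) (hsT : s ≤ T) {y : EuclideanSpace ℝ (Fin d)} (hy : ‖y‖ ≤ R) :
    |costAlong T ℓ g s (trajFrom A B t y v) v - costAlong T ℓ g s (trajFrom A B s y u) u| ≤
      (c₂ * (1 + κ) * T + Kg) * ((‖A‖ * R + ‖B‖ * κ) * Real.exp (T * ‖A‖) * (s - t)) := by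
  have hκ : 0 ≤ κ := (norm_nonneg _).trans (huκ 0)
  have hR : 0 ≤ R := (norm_nonneg y).trans hy
  have hst : 0 ≤ s - t := sub_nonneg.2 hts
  have hc₂ := h.c₂_nonneg
  refine (h.abs_costAlong_sub_costAlong_le hg hsT huκ hvu
    (fun σ hσ => norm_trajFrom_sub_trajFrom_le ht hts hσ hv hvκ
      (hvu.mono (Ioc_subset_Ioc_right hσ.2)) hy)
    (h.integrableOn ((continuousOn_trajFrom hv hvκ t y T).mono (Icc_subset_Icc_left hts)) hv hvκ)
    (h.integrableOn (continuousOn_trajFrom hu huκ s y T) hu huκ)).trans ?_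
  gcongr
  linarith

theorem costFrom_indicator_sub_costFrom_le (h : LagrangianBounds c₀ c₁ c₂ ℓ)
    (hg : LipschitzWith Kg g) (hu : StronglyMeasurable u) (huκ : ∀ τ, ‖u τ‖ ≤ κ) {t s : ℝ}
    (ht : 0 ≤ t) (hts : t ≤ s) (hsT : s ≤ T) {y : EuclideanSpace ℝ (Fin d)}
    (hy : ‖y‖ ≤ R) :
    costFrom T A B ℓ g t y ((Ioi s).indicator u) - costFrom T A B ℓ g s y u ≤
      (c₁ + (c₂ * (1 + κ) * T + Kg) * ((‖A‖ * R + ‖B‖ * κ) * Real.exp (T * ‖A‖))) * (s - t) := by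
  set v := (Ioi s).indicator u
  have hv : StronglyMeasurable v := hu.indicator measurableSet_Ioi
  have hvκ (τ : ℝ) : ‖v τ‖ ≤ κ := (norm_indicator_le_norm_self u τ).trans (huκ τ)
  have hstart : (∫ σ in Ioc t s, ℓ σ (trajFrom A B t y v σ) (v σ)) ≤ c₁ * (s - t) := by
    rw [← Real.volume_real_Ioc_of_le hts]
    refine (le_abs_self _).trans (Real.norm_eq_abs _ ▸
      norm_setIntegral_le_of_norm_le_const measure_Ioc_lt_top fun σ hσ => ?_)
    rw [show v σ = 0 from indicator_of_notMem (notMem_Ioi.2 hσ.2) u, Real.norm_eq_abs]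
    exact h.abs_apply_zero_le σ _
  have hrest := abs_costAlong_trajFrom_sub_le (A := A) (B := B) h hg hu huκ hv hvκ
    (fun σ hσ => indicator_of_mem (Ioc_subset_Ioi_self hσ) u) ht hts hsT hy
  rw [costFrom_eq_costAlong, costFrom_eq_costAlong, costAlong_eq_integral_add hts hsT
    (h.integrableOn (continuousOn_trajFrom hv hvκ t y T) hv hvκ)]
  linarith [le_abs_self (costAlong T ℓ g s (trajFrom A B t y v) v -
    costAlong T ℓ g s (trajFrom A B s y u) u)]

theorem costFrom_sub_costFrom_le_of_le (h : LagrangianBounds c₀ c₁ c₂ ℓ)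
    (hg : LipschitzWith Kg g) (hu : StronglyMeasurable u) (huκ : ∀ τ, ‖u τ‖ ≤ κ) {t s : ℝ}
    (ht : 0 ≤ t) (hts : t ≤ s) (hsT : s ≤ T) {y : EuclideanSpace ℝ (Fin d)}
    (hy : ‖y‖ ≤ R) :
    costFrom T A B ℓ g s y u - costFrom T A B ℓ g t y u ≤
      (c₁ + (c₂ * (1 + κ) * T + Kg) * ((‖A‖ * R + ‖B‖ * κ) * Real.exp (T * ‖A‖))) * (s - t) := by
  have hint := h.integrableOn (continuousOn_trajFrom (A := A) (B := B) hu huκ t y T) hu huκ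
  have hstart : -c₁ * (s - t) ≤ ∫ σ in Ioc t s, ℓ σ (trajFrom A B t y u σ) (u σ) := by
    rw [← Real.volume_real_Ioc_of_le hts]
    exact setIntegral_ge_of_const_le_real measurableSet_Ioc measure_Ioc_lt_top.ne
      (fun σ _ => h.neg_le _ _ _) (hint.mono_set (Ioc_subset_Ioc_right hsT))
  have hrest := abs_costAlong_trajFrom_sub_le (A := A) (B := B) h hg hu huκ hu huκ
    (eqOn_refl u _) ht hts hsT hy
  rw [costFrom_eq_costAlong, costFrom_eq_costAlong, costAlong_eq_integral_add hts hsT hint]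
  linarith [neg_abs_le (costAlong T ℓ g s (trajFrom A B t y u) u -
    costAlong T ℓ g s (trajFrom A B s y u) u)]

theorem valueFun_le_costFrom (hℓ : ∀ t x u, -c₁ ≤ ℓ t x u) (hc₁ : 0 ≤ c₁)
    (hgb : ∀ y, |g y| ≤ Mg) {t : ℝ} (htT : t ≤ T) (x : EuclideanSpace ℝ (Fin d))
    (hu : MemLp u 2 (volume.restrict (Ioc t T))) :
    valueFun T A B ℓ g t x ≤ costFrom T A B ℓ g t x u := by
  refine csInf_le ⟨-(c₁ * (T - t)) - Mg, ?_⟩ (mem_image_of_mem _ hu)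
  rintro _ ⟨w, -, rfl⟩
  have hrun : -(c₁ * (T - t)) ≤ ∫ σ in Ioc t T, ℓ σ (trajFrom A B t x w σ) (w σ) := by
    by_cases hint : IntegrableOn (fun σ => ℓ σ (trajFrom A B t x w σ) (w σ)) (Ioc t T)
    · rw [← Real.volume_real_Ioc_of_le htT, ← neg_mul]
      exact setIntegral_ge_of_const_le_real measurableSet_Ioc measure_Ioc_lt_top.ne
        (fun σ _ => hℓ _ _ _) hint
    · -- the integral of a non-integrable function is `0`
      rw [integral_undef hint, neg_nonpos]
      exact mul_nonneg hc₁ (sub_nonneg.2 htT)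
  dsimp only
  rw [costFrom]
  linarith [neg_abs_le (g (trajFrom A B t x w T)), hgb (trajFrom A B t x w T)]

variable (T A B ℓ g) in
def HasBoundedOptimalControl (κ t : ℝ) (x : EuclideanSpace ℝ (Fin d)) : Prop :=
  ∃ u : ℝ → EuclideanSpace ℝ (Fin k), StronglyMeasurable u ∧ (∀ τ, ‖u τ‖ ≤ κ) ∧
    costFrom T A B ℓ g t x u = valueFun T A B ℓ g t x

theorem HasBoundedOptimalControl.of_memLp {t : ℝ} {x : EuclideanSpace ℝ (Fin d)}
    (hκ : 0 ≤ κ) (hu : MemLp u 2 (volume.restrict (Ioc t T)))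
    (huκ : ∀ᵐ τ ∂(volume.restrict (Ioc t T)), ‖u τ‖ ≤ κ)
    (hopt : costFrom T A B ℓ g t x u = valueFun T A B ℓ g t x) :
    HasBoundedOptimalControl T A B ℓ g κ t x :=
  let ⟨u', hu', hu'κ, hae⟩ := exists_stronglyMeasurable_norm_le_ae_eq hu.aestronglyMeasurable hκ huκ
  ⟨u', hu', hu'κ, (costFrom_congr_ae x hae).trans hopt⟩

theorem valueFun_sub_valueFun_le_of_optimal (h : LagrangianBounds c₀ c₁ c₂ ℓ) (hc₁ : 0 ≤ c₁)
    (hgb : ∀ y, |g y| ≤ Mg) (hg : LipschitzWith Kg g) {t : ℝ} (ht : t ∈ Icc 0 T)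
    (x : EuclideanSpace ℝ (Fin d)) {y : EuclideanSpace ℝ (Fin d)}
    (hy : HasBoundedOptimalControl T A B ℓ g κ t y) :
    valueFun T A B ℓ g t x - valueFun T A B ℓ g t y ≤
      (c₂ * (1 + κ) * T + Kg) * (Real.exp (T * ‖A‖) * ‖x - y‖) := by
  obtain ⟨u, hu, huκ, hopt⟩ := hy
  have hle := valueFun_le_costFrom (A := A) (B := B) h.neg_le hc₁ hgb ht.2 x
    (MemLp.of_bound hu.aestronglyMeasurable κ (ae_of_all _ huκ))
  linarith [le_abs_self (costFrom T A B ℓ g t x u - costFrom T A B ℓ g t y u),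
    abs_costFrom_sub_costFrom_le (A := A) (B := B) h hg hu huκ ht x y]

theorem valueFun_sub_valueFun_later_le (h : LagrangianBounds c₀ c₁ c₂ ℓ) (hc₁ : 0 ≤ c₁)
    (hgb : ∀ y, |g y| ≤ Mg) (hg : LipschitzWith Kg g) {t s : ℝ} (ht : 0 ≤ t) (hts : t ≤ s)
    (hsT : s ≤ T) {z : EuclideanSpace ℝ (Fin d)} (hz : ‖z‖ ≤ R)
    (hs : HasBoundedOptimalControl T A B ℓ g κ s z) :
    valueFun T A B ℓ g t z - valueFun T A B ℓ g s z ≤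
      (c₁ + (c₂ * (1 + κ) * T + Kg) * ((‖A‖ * R + ‖B‖ * κ) * Real.exp (T * ‖A‖))) * (s - t) := by
  obtain ⟨u, hu, huκ, hopt⟩ := hs
  have hle := valueFun_le_costFrom (A := A) (B := B) (u := (Ioi s).indicator u) h.neg_le hc₁ hgb
    (hts.trans hsT) z (MemLp.of_bound (hu.indicator measurableSet_Ioi).aestronglyMeasurable κ
      (ae_of_all _ fun τ => (norm_indicator_le_norm_self u τ).trans (huκ τ)))
  linarith [costFrom_indicator_sub_costFrom_le (A := A) (B := B) h hg hu huκ ht hts hsT hz]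

theorem valueFun_later_sub_valueFun_le (h : LagrangianBounds c₀ c₁ c₂ ℓ) (hc₁ : 0 ≤ c₁)
    (hgb : ∀ y, |g y| ≤ Mg) (hg : LipschitzWith Kg g) {t s : ℝ} (ht : 0 ≤ t) (hts : t ≤ s)
    (hsT : s ≤ T) {z : EuclideanSpace ℝ (Fin d)} (hz : ‖z‖ ≤ R)
    (htz : HasBoundedOptimalControl T A B ℓ g κ t z) :
    valueFun T A B ℓ g s z - valueFun T A B ℓ g t z ≤
      (c₁ + (c₂ * (1 + κ) * T + Kg) * ((‖A‖ * R + ‖B‖ * κ) * Real.exp (T * ‖A‖))) * (s - t) := by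
  obtain ⟨u, hu, huκ, hopt⟩ := htz
  have hle := valueFun_le_costFrom (A := A) (B := B) h.neg_le hc₁ hgb hsT z
    (MemLp.of_bound hu.aestronglyMeasurable κ (ae_of_all _ huκ))
  linarith [costFrom_sub_costFrom_le_of_le (A := A) (B := B) h hg hu huκ ht hts hsT hz]

theorem abs_valueFun_sub_valueFun_le_of_time (h : LagrangianBounds c₀ c₁ c₂ ℓ) (hc₁ : 0 ≤ c₁)
    (hgb : ∀ y, |g y| ≤ Mg) (hg : LipschitzWith Kg g) {z : EuclideanSpace ℝ (Fin d)}
    (hz : ‖z‖ ≤ R) (hopt : ∀ t ∈ Icc 0 T, HasBoundedOptimalControl T A B ℓ g κ t z) {t s : ℝ}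
    (ht : t ∈ Icc 0 T) (hs : s ∈ Icc 0 T) :
    |valueFun T A B ℓ g t z - valueFun T A B ℓ g s z| ≤
      (c₁ + (c₂ * (1 + κ) * T + Kg) * ((‖A‖ * R + ‖B‖ * κ) * Real.exp (T * ‖A‖))) * |t - s| := by
  wlog hts : t ≤ s generalizing t s
  · rw [abs_sub_comm, abs_sub_comm t]
    exact this hs ht (le_of_not_ge hts)
  rw [abs_sub_le_iff, abs_of_nonpos (sub_nonpos.2 hts), neg_sub]
  exact ⟨valueFun_sub_valueFun_later_le h hc₁ hgb hg ht.1 hts hs.2 hz (hopt s hs),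
    valueFun_later_sub_valueFun_le h hc₁ hgb hg ht.1 hts hs.2 hz (hopt t ht)⟩

theorem abs_valueFun_sub_valueFun_le_of_space (h : LagrangianBounds c₀ c₁ c₂ ℓ) (hc₁ : 0 ≤ c₁)
    (hgb : ∀ y, |g y| ≤ Mg) (hg : LipschitzWith Kg g) {t : ℝ} (ht : t ∈ Icc 0 T)
    {x y : EuclideanSpace ℝ (Fin d)} (hx : HasBoundedOptimalControl T A B ℓ g κ t x)
    (hy : HasBoundedOptimalControl T A B ℓ g κ t y) :
    |valueFun T A B ℓ g t x - valueFun T A B ℓ g t y| ≤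
      (c₂ * (1 + κ) * T + Kg) * (Real.exp (T * ‖A‖) * ‖x - y‖) := by
  refine abs_sub_le_iff.2 ⟨valueFun_sub_valueFun_le_of_optimal h hc₁ hgb hg ht x hy, ?_⟩
  rw [norm_sub_rev]
  exact valueFun_sub_valueFun_le_of_optimal h hc₁ hgb hg ht y hx

end ControlProblem

theorem value_function_locally_lipschitz {d k : ℕ} (T : ℝ) (hT : 0 < T)
    (A : EuclideanSpace ℝ (Fin d) →L[ℝ] EuclideanSpace ℝ (Fin d))
    (B : EuclideanSpace ℝ (Fin k) →L[ℝ] EuclideanSpace ℝ (Fin d))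
    (c₀ c₁ c₂ : ℝ) (hc₀ : 0 < c₀) (hc₁ : 0 ≤ c₁) (hc₂ : 0 ≤ c₂)
    (ℓ : ℝ → EuclideanSpace ℝ (Fin d) → EuclideanSpace ℝ (Fin k) → ℝ)
    (hcont : Continuous fun p : ℝ × EuclideanSpace ℝ (Fin d) × EuclideanSpace ℝ (Fin k) =>
      ℓ p.1 p.2.1 p.2.2)
    (hgrowth : ∀ t x u, c₀ * ‖u‖ ^ 2 - c₁ ≤ ℓ t x u ∧ ℓ t x u ≤ c₁ + (1 / c₀) * ‖u‖ ^ 2)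
    (hlip : ∀ t x y u, |ℓ t x u - ℓ t y u| ≤ c₂ * (1 + ‖u‖) * ‖x - y‖)
    (g : EuclideanSpace ℝ (Fin d) → ℝ) (Mg : ℝ) (hgb : ∀ y, |g y| ≤ Mg)
    (Kg : NNReal) (hgl : LipschitzWith Kg g)
    (hattain : ∀ R > (0 : ℝ), ∃ κ ≥ (0 : ℝ), ∀ t ∈ Set.Icc (0 : ℝ) T,
      ∀ x : EuclideanSpace ℝ (Fin d), ‖x‖ ≤ R →
        ∃ u : ℝ → EuclideanSpace ℝ (Fin k),
          MemLp u 2 (volume.restrict (Set.Ioc t T)) ∧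
          (∀ᵐ s ∂(volume.restrict (Set.Ioc t T)), ‖u s‖ ≤ κ) ∧
          costFrom T A B ℓ g t x u = valueFun T A B ℓ g t x) :
    ∀ R > (0 : ℝ), ∃ C ≥ (0 : ℝ), ∀ t ∈ Set.Icc (0 : ℝ) T, ∀ s ∈ Set.Icc (0 : ℝ) T,
      ∀ x y : EuclideanSpace ℝ (Fin d), ‖x‖ ≤ R → ‖y‖ ≤ R →
        |valueFun T A B ℓ g t x - valueFun T A B ℓ g s y| ≤
          C * (‖x - y‖ + |t - s|) := by
  intro R hR
  obtain ⟨κ, hκ, hattainR⟩ := hattain R hR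
  have h : LagrangianBounds c₀ c₁ c₂ ℓ := ⟨hcont, hc₀, hc₂, hgrowth, hlip⟩
  have hopt (t : ℝ) (ht : t ∈ Icc 0 T) (x : EuclideanSpace ℝ (Fin d)) (hx : ‖x‖ ≤ R) :
      HasBoundedOptimalControl T A B ℓ g κ t x :=
    let ⟨_, hu, huκ, hcost⟩ := hattainR t ht x hx
    .of_memLp hκ hu huκ hcost
  set K := c₂ * (1 + κ) * T + Kg
  set M := Real.exp (T * ‖A‖)
  set D := c₁ + K * ((‖A‖ * R + ‖B‖ * κ) * M)
  have hKM : 0 ≤ K * M := by positivity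
  have hD : 0 ≤ D := by positivity
  refine ⟨K * M + D, by positivity, fun t ht s hs x y hx hy => ?_⟩
  calc |valueFun T A B ℓ g t x - valueFun T A B ℓ g s y|
      ≤ |valueFun T A B ℓ g t x - valueFun T A B ℓ g t y|
        + |valueFun T A B ℓ g t y - valueFun T A B ℓ g s y| := abs_sub_le _ _ _
    _ ≤ K * (M * ‖x - y‖) + D * |t - s| := add_le_add
        (abs_valueFun_sub_valueFun_le_of_space h hc₁ hgb hgl ht (hopt t ht x hx) (hopt t ht y hy))
        (abs_valueFun_sub_valueFun_le_of_time h hc₁ hgb hgl hy (fun t ht => hopt t ht y hy) ht hs)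
    _ ≤ (K * M + D) * (‖x - y‖ + |t - s|) := by
        nlinarith [mul_nonneg hKM (abs_nonneg (t - s)), mul_nonneg hD (norm_nonneg (x - y))]
end

section
/- Let H : [0,T] × ℝᵈ × ℝᵈ → ℝ be differentiable in (x,p) with |D_pH(t,x,p)| ≤ c₂(1 + |x| + |p|) and ⟨D_xH(t,x,p), p⟩ ≥ c₃|p|² − c₄ for all (t,x,p), where c₂, c₄ ≥ 0 and c₃ > 0. Let γ, p : [0,T] → ℝᵈ be differentiable curves satisfying the Hamiltonian system γ′(t) = −D_pH(t, γ(t), p(t)) and p′(t) = D_xH(t, γ(t), p(t)) for all t ∈ [0,T], and suppose |p(T)| ≤ M and sup_{t∈[0,T]} |γ(t)| ≤ C̃(1 + |γ(0)|). Then there exists a constant Q ≥ 0, depending only on c₂, c₃, c₄, M and C̃, such that sup_{t∈[0,T]} |γ′(t)| ≤ Q(1 + |γ(0)|). -/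
/-! The costate obeys a linear differential inequality backwards from the terminal time:
by (H1), `u = ‖p‖² - c₄ / c₃` satisfies `u' ≥ 2 c₃ u`, so `e^{-2 c₃ s} u(s)` is nondecreasing and
`‖p t‖² ≤ max (‖p T‖², c₄ / c₃)`. With the a priori bound on `γ`, the linear growth of `D_pH`
then bounds `γ' = -D_pH(t, γ, p)` linearly in `‖γ 0‖`. -/

open scoped RealInnerProductSpace

open Real Set

theorem monotoneOn_exp_mul_of_mul_le_deriv {D : Set ℝ} (hD : Convex ℝ D) {f f' : ℝ → ℝ} {k : ℝ}
    (hf : ∀ s ∈ D, HasDerivAt f (f' s) s) (hgrowth : ∀ s ∈ D, k * f s ≤ f' s) :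
    MonotoneOn (fun s => exp (-(k * s)) * f s) D := by
  have hderiv : ∀ s ∈ D, HasDerivAt (fun s => exp (-(k * s)) * f s)
      (exp (-(k * s)) * (f' s - k * f s)) s := by
    intro s hs
    have hexp : HasDerivAt (fun s => exp (-(k * s))) (exp (-(k * s)) * -k) s := by
      simpa using ((hasDerivAt_id s).const_mul k).neg.exp
    exact (hexp.mul (hf s hs)).congr_deriv (by ring)
  refine monotoneOn_of_hasDerivWithinAt_nonneg hD
    (fun s hs => (hderiv s hs).continuousAt.continuousWithinAt)
    (fun s hs => (hderiv s (interior_subset hs)).hasDerivWithinAt) fun s hs => ?_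
  exact mul_nonneg (exp_nonneg _) (sub_nonneg.mpr (hgrowth s (interior_subset hs)))

theorem le_max_zero_of_mul_le_deriv {f f' : ℝ → ℝ} {k a b : ℝ} (hk : 0 ≤ k)
    (hf : ∀ s ∈ Icc a b, HasDerivAt f (f' s) s) (hgrowth : ∀ s ∈ Icc a b, k * f s ≤ f' s)
    {t : ℝ} (ht : t ∈ Icc a b) : f t ≤ max (f b) 0 := by
  have hb : b ∈ Icc a b := ⟨ht.1.trans ht.2, le_rfl⟩
  have hmono := monotoneOn_exp_mul_of_mul_le_deriv (convex_Icc a b) hf hgrowth ht hb ht.2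
  have hexp : exp (-(k * b)) ≤ exp (-(k * t)) := exp_le_exp.mpr (by nlinarith [ht.2])
  refine le_of_mul_le_mul_left ?_ (exp_pos (-(k * t)))
  calc exp (-(k * t)) * f t ≤ exp (-(k * b)) * f b := hmono
    _ ≤ exp (-(k * b)) * max (f b) 0 := mul_le_mul_of_nonneg_left (le_max_left _ _) (exp_nonneg _)
    _ ≤ exp (-(k * t)) * max (f b) 0 := mul_le_mul_of_nonneg_right hexp (le_max_right _ _)

theorem norm_le_max_sqrt_of_coercive_deriv {E : Type*} [NormedAddCommGroup E]
    [InnerProductSpace ℝ E] {p p' : ℝ → E} {k c a b : ℝ} (hk : 0 < k)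
    (hp : ∀ s ∈ Icc a b, HasDerivAt p (p' s) s)
    (hcoercive : ∀ s ∈ Icc a b, k * ‖p s‖ ^ 2 - c ≤ ⟪p' s, p s⟫)
    {t : ℝ} (ht : t ∈ Icc a b) : ‖p t‖ ≤ max ‖p b‖ √(c / k) := by
  have hsq : ‖p t‖ ^ 2 - c / k ≤ max (‖p b‖ ^ 2 - c / k) 0 := by
    refine le_max_zero_of_mul_le_deriv (by positivity : 0 ≤ 2 * k)
      (fun s hs => ((hp s hs).norm_sq).sub_const (c / k)) (fun s hs => ?_) ht
    have := hcoercive s hs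
    rw [real_inner_comm]
    field_simp
    linarith
  calc ‖p t‖ = √(‖p t‖ ^ 2) := (sqrt_sq (norm_nonneg _)).symm
    _ ≤ √(max (‖p b‖ ^ 2) (c / k)) := sqrt_le_sqrt <| (le_max_iff.mp hsq).elim
        (fun h => le_max_of_le_left (by linarith)) (fun h => le_max_of_le_right (by linarith))
    _ = max ‖p b‖ √(c / k) := by rw [sqrt_monotone.map_max, sqrt_sq (norm_nonneg _)]

theorem bounded_velocity_of_hamiltonian_system_general {d : ℕ} (T : ℝ)
    (c₂ c₃ c₄ M Ctilde : ℝ) (hc₂ : 0 ≤ c₂) (hc₃ : 0 < c₃)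
    (hCt : 0 ≤ Ctilde)
    (Hx Hp : ℝ → EuclideanSpace ℝ (Fin d) → EuclideanSpace ℝ (Fin d) →
      EuclideanSpace ℝ (Fin d))
    (hHp : ∀ t x p, ‖Hp t x p‖ ≤ c₂ * (1 + ‖x‖ + ‖p‖))
    (hHx : ∀ t x p, c₃ * ‖p‖ ^ 2 - c₄ ≤ ⟪Hx t x p, p⟫) :
    ∃ Q ≥ (0 : ℝ), ∀ γ p : ℝ → EuclideanSpace ℝ (Fin d),
      (∀ t ∈ Set.Icc (0 : ℝ) T, HasDerivAt γ (-(Hp t (γ t) (p t))) t) →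
      (∀ t ∈ Set.Icc (0 : ℝ) T, HasDerivAt p (Hx t (γ t) (p t)) t) →
      ‖p T‖ ≤ M →
      (∀ t ∈ Set.Icc (0 : ℝ) T, ‖γ t‖ ≤ Ctilde * (1 + ‖γ 0‖)) →
      ∀ t ∈ Set.Icc (0 : ℝ) T, ‖deriv γ t‖ ≤ Q * (1 + ‖γ 0‖) := by
  set P := max M √(c₄ / c₃)
  have hP : 0 ≤ P := le_max_of_le_right (sqrt_nonneg _)
  refine ⟨c₂ * (1 + Ctilde + P), by positivity, fun γ p hγ hp hpT hγb t ht => ?_⟩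
  have hpt : ‖p t‖ ≤ P :=
    (norm_le_max_sqrt_of_coercive_deriv hc₃ hp (fun s _ => hHx s (γ s) (p s)) ht).trans
      (max_le_max_right _ hpT)
  have hγ0 : 0 ≤ ‖γ 0‖ := norm_nonneg _
  rw [(hγ t ht).deriv, norm_neg]
  calc ‖Hp t (γ t) (p t)‖ ≤ c₂ * (1 + ‖γ t‖ + ‖p t‖) := hHp _ _ _
    _ ≤ c₂ * (1 + Ctilde * (1 + ‖γ 0‖) + P) := by gcongr; exact hγb t ht
    _ ≤ c₂ * (1 + Ctilde + P) * (1 + ‖γ 0‖) := by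
        rw [mul_assoc]
        gcongr
        nlinarith

theorem bounded_velocity_of_hamiltonian_system {d : ℕ} (T : ℝ) (hT : 0 < T)
    (c₂ c₃ c₄ M Ctilde : ℝ) (hc₂ : 0 ≤ c₂) (hc₃ : 0 < c₃) (hc₄ : 0 ≤ c₄)
    (hM : 0 ≤ M) (hCt : 0 ≤ Ctilde)
    (H : ℝ → EuclideanSpace ℝ (Fin d) → EuclideanSpace ℝ (Fin d) → ℝ)
    (Hx Hp : ℝ → EuclideanSpace ℝ (Fin d) → EuclideanSpace ℝ (Fin d) →
      EuclideanSpace ℝ (Fin d))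
    (hgradx : ∀ t x p, HasGradientAt (fun y => H t y p) (Hx t x p) x)
    (hgradp : ∀ t x p, HasGradientAt (fun q => H t x q) (Hp t x p) p)
    (hHp : ∀ t x p, ‖Hp t x p‖ ≤ c₂ * (1 + ‖x‖ + ‖p‖))
    (hHx : ∀ t x p, c₃ * ‖p‖ ^ 2 - c₄ ≤ ⟪Hx t x p, p⟫) :
    ∃ Q ≥ (0 : ℝ), ∀ γ p : ℝ → EuclideanSpace ℝ (Fin d),
      (∀ t ∈ Set.Icc (0 : ℝ) T, HasDerivAt γ (-(Hp t (γ t) (p t))) t) →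
      (∀ t ∈ Set.Icc (0 : ℝ) T, HasDerivAt p (Hx t (γ t) (p t)) t) →
      ‖p T‖ ≤ M →
      (∀ t ∈ Set.Icc (0 : ℝ) T, ‖γ t‖ ≤ Ctilde * (1 + ‖γ 0‖)) →
      ∀ t ∈ Set.Icc (0 : ℝ) T, ‖deriv γ t‖ ≤ Q * (1 + ‖γ 0‖) :=
  bounded_velocity_of_hamiltonian_system_general T c₂ c₃ c₄ M Ctilde hc₂ hc₃ hCt Hx Hp hHp hHx
end
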